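/- arXiv:1505.04304 — 2 statements merged into one kernel-verified Lean document; each statement's English description precedes it below -/
import Mathlib

section
/- If A is a summand-ideal of the pseudo MV-algebra M = Γ(G,u), then every normal ideal I of M satisfies I = (A ∩ I) ⊕ (I ∩ A^⊥). -/
variable {G : Type*} [Lattice G] [AddGroup G]
  [CovariantClass G G (· + ·) (· ≤ ·)]
  [CovariantClass G G (Function.swap (· + ·)) (· ≤ ·)]

/-- `u` is a strong unit of the lattice-ordered group `G`. -/
def IsStrongUnit (u : G) : Prop := 0 ≤ u ∧ ∀ x : G, ∃ n : ℕ, x ≤ n • u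

/-- The operation `x ⊕ y := (x + y) ⊓ u` of the pseudo MV-algebra `Γ(G,u)`. -/
def oplus (u x y : G) : G := (x + y) ⊓ u

/-- The operation `x ⊙ y := (x - u + y) ⊔ 0` of the pseudo MV-algebra `Γ(G,u)`. -/
def odot (u x y : G) : G := (x - u + y) ⊔ 0

/-- `n.x := x ⊕ ⋯ ⊕ x` (`n` summands), with `0.x = 0`. -/
def nOplus (u : G) : ℕ → G → G
  | 0, _ => 0
  | n + 1, x => oplus u (nOplus u n x) x

/-- `I` is an ideal of the pseudo MV-algebra with carrier `C ⊆ Γ(G,u)`: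
a nonempty subset of `C`, downward closed within `C`, and closed under `⊕`. -/
def IsIdealIn (u : G) (C I : Set G) : Prop :=
  I ⊆ C ∧ I.Nonempty ∧ (∀ x ∈ I, ∀ y ∈ C, y ≤ x → y ∈ I) ∧
    ∀ x ∈ I, ∀ y ∈ I, oplus u x y ∈ I

/-- `I` is a normal ideal: `x ⊕ I = I ⊕ x` for all `x ∈ C`. -/
def IsNormalIdealIn (u : G) (C I : Set G) : Prop :=
  IsIdealIn u C I ∧ ∀ x ∈ C, (fun i => oplus u x i) '' I = (fun i => oplus u i x) '' I

/-- `⟨X⟩_n`, the smallest normal ideal (of the carrier `C`) containing `X`. -/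
def normalGenIn (u : G) (C X : Set G) : Set G :=
  ⋂₀ {I | IsNormalIdealIn u C I ∧ X ⊆ I}

/-- The polar `X^⊥ = {y ∈ C : y ∧ x = 0 for all x ∈ X}` computed in carrier `C`. -/
def polarIn (C X : Set G) : Set G := {y ∈ C | ∀ x ∈ X, y ⊓ x = 0}

/-- `A ⊕ B := {a ⊕ b : a ∈ A, b ∈ B}`. -/
def setOplus (u : G) (A B : Set G) : Set G := Set.image2 (oplus u) A B

/-- `↓a` computed within the carrier `C`. -/
def dsetIn (C : Set G) (a : G) : Set G := {x ∈ C | x ≤ a}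

/-- `I` is a summand-ideal of the carrier `C`: a normal ideal such that for
some normal ideal `J`, `I ∩ J = {0}` and `⟨I ∪ J⟩_n = C`. -/
def IsSummandIdealIn (u : G) (C I : Set G) : Prop :=
  IsNormalIdealIn u C I ∧ ∃ J, IsNormalIdealIn u C J ∧ I ∩ J = {0} ∧
    normalGenIn u C (I ∪ J) = C

/-- `I` is a polar ideal of the carrier `C`: `I = I^⊥⊥`. -/
def IsPolarIdealIn (C I : Set G) : Prop := polarIn C (polarIn C I) = I

/-- `a` is a Boolean element of the carrier `C`: `a ∈ C` and `a ⊕ a = a`. -/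
def IsBooleanIn (u : G) (C : Set G) (a : G) : Prop := a ∈ C ∧ oplus u a a = a

/-- The carrier `C` is strongly projectable: every polar ideal is a summand-ideal. -/
def IsStronglyProjectableIn (u : G) (C : Set G) : Prop :=
  ∀ I : Set G, IsPolarIdealIn C I → IsSummandIdealIn u C I

/-- `N` is a subalgebra of `Γ(G,u)`: contains `0` and `u`, closed under `⊕`,
`x⁻ = u - x` and `x∼ = -x + u`. -/
def IsSubalg (u : G) (N : Set G) : Prop :=
  N ⊆ Set.Icc 0 u ∧ 0 ∈ N ∧ u ∈ N ∧
    (∀ x ∈ N, ∀ y ∈ N, oplus u x y ∈ N) ∧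
    (∀ x ∈ N, u - x ∈ N) ∧ (∀ x ∈ N, -x + u ∈ N)

/-- `N` is a large subalgebra of `Γ(G,u)`: for every nonzero `y ∈ Γ(G,u)` there
are `n ∈ ℕ` and a nonzero `x ∈ N` with `x ≤ n.y`. -/
def IsLargeSubalg (u : G) (N : Set G) : Prop :=
  IsSubalg u N ∧ ∀ y ∈ Set.Icc (0 : G) u, y ≠ 0 →
    ∃ n : ℕ, ∃ x ∈ N, x ≠ 0 ∧ x ≤ nOplus u n y

/-!
Split `Γ(G,u) = A ⊞ J`. Elements of `A` and `J` are orthogonal, and orthogonal positive elements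
commute, so `A ⊕ J` is a normal ideal containing `A ∪ J`; hence it is all of `Γ(G,u)`. Since
`J ⊆ A^⊥`, every `x ∈ I` is then `a ⊕ b` with `a ∈ A`, `b ∈ A^⊥`, and `a, b ≤ x` lie in `I`.
-/

section LatticeOrderedGroup

variable {a b t u x y : G}

lemma add_eq_sup_of_inf_eq_zero (h : a ⊓ b = 0) : a + b = a ⊔ b := by
  have key : a + (-(a ⊓ b) + b) = b ⊔ a := by
    rw [neg_inf, sup_add, add_sup]
    simp [sup_comm]
  rwa [h, neg_zero, zero_add, sup_comm] at key

lemma add_comm_of_inf_eq_zero (h : a ⊓ b = 0) : a + b = b + a := by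
  rw [add_eq_sup_of_inf_eq_zero h, add_eq_sup_of_inf_eq_zero (inf_comm a b ▸ h), sup_comm]

lemma inf_add_inf_eq_of_le_add (hy : 0 ≤ y) (ha : 0 ≤ a) (hb : 0 ≤ b) (hab : a ⊓ b = 0)
    (hyab : y ≤ a + b) : y ⊓ a + y ⊓ b = y := by
  have horth : (y ⊓ a) ⊓ (y ⊓ b) = 0 :=
    le_antisymm (hab ▸ inf_le_inf inf_le_right inf_le_right)
      (le_inf (le_inf hy ha) (le_inf hy hb))
  refine le_antisymm ?_ ?_
  · rw [add_eq_sup_of_inf_eq_zero horth]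
    exact sup_le inf_le_left inf_le_left
  · rw [add_inf, inf_add, inf_add]
    exact le_inf (le_inf (le_add_of_nonneg_left hy) (le_add_of_nonneg_left ha))
      (le_inf (le_add_of_nonneg_right hb) hyab)

lemma add_inf_inf_of_nonneg (hx : 0 ≤ x) : (x + t ⊓ u) ⊓ u = (x + t) ⊓ u := by
  rw [add_inf, inf_assoc, inf_eq_right.mpr (le_add_of_nonneg_left hx)]

lemma inf_add_inf_of_nonneg (hx : 0 ≤ x) : (t ⊓ u + x) ⊓ u = (t + x) ⊓ u := by
  rw [inf_add, inf_assoc, inf_eq_right.mpr (le_add_of_nonneg_right hx)]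

end LatticeOrderedGroup

section Oplus

variable {a b c u : G}

lemma oplus_assoc (ha : 0 ≤ a) (hc : 0 ≤ c) :
    oplus u (oplus u a b) c = oplus u a (oplus u b c) := by
  simp only [oplus]
  rw [inf_add_inf_of_nonneg hc, add_inf_inf_of_nonneg ha, add_assoc]

lemma oplus_comm_of_inf_eq_zero (h : a ⊓ b = 0) : oplus u a b = oplus u b a := by
  rw [oplus, oplus, add_comm_of_inf_eq_zero h]

omit [CovariantClass G G (· + ·) (· ≤ ·)]
  [CovariantClass G G (Function.swap (· + ·)) (· ≤ ·)] in
lemma oplus_eq_of_le (ha : a ≤ u) : oplus u a 0 = a := by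
  rw [oplus, add_zero, inf_eq_left.mpr ha]

omit [CovariantClass G G (· + ·) (· ≤ ·)]
  [CovariantClass G G (Function.swap (· + ·)) (· ≤ ·)] in
lemma zero_oplus_eq_of_le (ha : a ≤ u) : oplus u 0 a = a := by
  rw [oplus, zero_add, inf_eq_left.mpr ha]

omit [CovariantClass G G (Function.swap (· + ·)) (· ≤ ·)] in
lemma le_oplus_left (ha : a ≤ u) (hb : 0 ≤ b) : a ≤ oplus u a b :=
  le_inf (le_add_of_nonneg_right hb) ha

omit [CovariantClass G G (· + ·) (· ≤ ·)] in
lemma le_oplus_right (ha : 0 ≤ a) (hb : b ≤ u) : b ≤ oplus u a b :=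
  le_inf (le_add_of_nonneg_left ha) hb

omit [CovariantClass G G (Function.swap (· + ·)) (· ≤ ·)] in
lemma oplus_nonneg (hu : 0 ≤ u) (ha : 0 ≤ a) (hb : 0 ≤ b) : 0 ≤ oplus u a b :=
  le_inf (add_nonneg ha hb) hu

omit [CovariantClass G G (Function.swap (· + ·)) (· ≤ ·)] in
lemma oplus_mem_Icc (ha : a ∈ Set.Icc 0 u) (hb : 0 ≤ b) : oplus u a b ∈ Set.Icc 0 u :=
  ⟨oplus_nonneg (ha.1.trans ha.2) ha.1 hb, inf_le_right⟩

omit [CovariantClass G G (Function.swap (· + ·)) (· ≤ ·)] in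
lemma setOplus_subset_Icc {A B : Set G} (hA : A ⊆ Set.Icc 0 u) (hB : B ⊆ Set.Icc 0 u) :
    setOplus u A B ⊆ Set.Icc 0 u := by
  rintro _ ⟨a, ha, b, hb, rfl⟩
  exact oplus_mem_Icc (hA ha) (hB hb).1

lemma oplus_oplus_oplus_comm {a₁ a₂ b₁ b₂ : G} (hu : 0 ≤ u) (ha₁ : 0 ≤ a₁) (ha₂ : 0 ≤ a₂)
    (hb₁ : 0 ≤ b₁) (hb₂ : 0 ≤ b₂) (h : b₁ ⊓ a₂ = 0) :
    oplus u (oplus u a₁ b₁) (oplus u a₂ b₂) = oplus u (oplus u a₁ a₂) (oplus u b₁ b₂) :=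
  calc oplus u (oplus u a₁ b₁) (oplus u a₂ b₂)
      = oplus u a₁ (oplus u (oplus u b₁ a₂) b₂) := by
        rw [oplus_assoc ha₁ (oplus_nonneg hu ha₂ hb₂), oplus_assoc hb₁ hb₂]
    _ = oplus u a₁ (oplus u (oplus u a₂ b₁) b₂) := by rw [oplus_comm_of_inf_eq_zero h]
    _ = oplus u (oplus u a₁ a₂) (oplus u b₁ b₂) := by
        rw [oplus_assoc ha₂ hb₂, oplus_assoc ha₁ (oplus_nonneg hu hb₁ hb₂)]

end Oplus

section Ideal

omit [CovariantClass G G (· + ·) (· ≤ ·)]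
  [CovariantClass G G (Function.swap (· + ·)) (· ≤ ·)]

variable {u a b x y : G} {C A J : Set G}

lemma IsIdealIn.mem_of_le (hA : IsIdealIn u (Set.Icc 0 u) A) (ha : a ∈ A) (hy : 0 ≤ y)
    (hya : y ≤ a) : y ∈ A :=
  hA.2.2.1 a ha y ⟨hy, hya.trans (hA.1 ha).2⟩ hya

lemma IsIdealIn.zero_mem (hA : IsIdealIn u (Set.Icc 0 u) A) : (0 : G) ∈ A := by
  obtain ⟨a, ha⟩ := hA.2.1
  exact hA.mem_of_le ha le_rfl (hA.1 ha).1

lemma IsIdealIn.oplus_mem (hA : IsIdealIn u C A) (ha : a ∈ A) (hb : b ∈ A) : oplus u a b ∈ A :=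
  hA.2.2.2 a ha b hb

lemma IsIdealIn.inf_eq_zero_of_inter_eq (hA : IsIdealIn u (Set.Icc 0 u) A)
    (hJ : IsIdealIn u (Set.Icc 0 u) J) (hAJ : A ∩ J = {0}) (ha : a ∈ A) (hb : b ∈ J) :
    a ⊓ b = 0 := by
  have h0 : 0 ≤ a ⊓ b := le_inf (hA.1 ha).1 (hJ.1 hb).1
  have hmem : a ⊓ b ∈ A ∩ J := ⟨hA.mem_of_le ha h0 inf_le_left, hJ.mem_of_le hb h0 inf_le_right⟩
  rwa [hAJ] at hmem

lemma IsNormalIdealIn.exists_oplus_right_eq (hA : IsNormalIdealIn u C A) (hx : x ∈ C)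
    (ha : a ∈ A) : ∃ a' ∈ A, oplus u a' x = oplus u x a := by
  rw [← Set.mem_image, ← hA.2 x hx]
  exact Set.mem_image_of_mem _ ha

lemma IsNormalIdealIn.exists_oplus_left_eq (hA : IsNormalIdealIn u C A) (hx : x ∈ C)
    (ha : a ∈ A) : ∃ a' ∈ A, oplus u x a' = oplus u a x := by
  rw [← Set.mem_image, hA.2 x hx]
  exact Set.mem_image_of_mem _ ha

lemma union_subset_setOplus (hA : IsIdealIn u (Set.Icc 0 u) A)
    (hJ : IsIdealIn u (Set.Icc 0 u) J) : A ∪ J ⊆ setOplus u A J := by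
  rintro x (hx | hx)
  · exact ⟨x, hx, 0, hJ.zero_mem, oplus_eq_of_le (hA.1 hx).2⟩
  · exact ⟨0, hA.zero_mem, x, hx, zero_oplus_eq_of_le (hJ.1 hx).2⟩

end Ideal

section SetOplus

variable {u x : G} {A J : Set G}

lemma isIdealIn_setOplus (hA : IsIdealIn u (Set.Icc 0 u) A) (hJ : IsIdealIn u (Set.Icc 0 u) J)
    (horth : ∀ a ∈ A, ∀ b ∈ J, a ⊓ b = 0) : IsIdealIn u (Set.Icc 0 u) (setOplus u A J) := by
  refine ⟨setOplus_subset_Icc hA.1 hJ.1, ⟨0, union_subset_setOplus hA hJ (Or.inl hA.zero_mem)⟩,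
    ?_, ?_⟩
  · rintro _ ⟨a, ha, b, hb, rfl⟩ y hy hyab
    have ha0 := (hA.1 ha).1
    have hb0 := (hJ.1 hb).1
    have hy_eq : oplus u (y ⊓ a) (y ⊓ b) = y := by
      rw [oplus, inf_add_inf_eq_of_le_add hy.1 ha0 hb0 (horth a ha b hb) (hyab.trans inf_le_left),
        inf_eq_left.mpr hy.2]
    exact hy_eq ▸ ⟨_, hA.mem_of_le ha (le_inf hy.1 ha0) inf_le_right,
      _, hJ.mem_of_le hb (le_inf hy.1 hb0) inf_le_right, rfl⟩
  · rintro _ ⟨a₁, ha₁, b₁, hb₁, rfl⟩ _ ⟨a₂, ha₂, b₂, hb₂, rfl⟩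
    have hu : (0 : G) ≤ u := (hA.1 ha₁).1.trans (hA.1 ha₁).2
    rw [oplus_oplus_oplus_comm hu (hA.1 ha₁).1 (hA.1 ha₂).1 (hJ.1 hb₁).1 (hJ.1 hb₂).1
      (inf_comm a₂ b₁ ▸ horth a₂ ha₂ b₁ hb₁)]
    exact ⟨_, hA.oplus_mem ha₁ ha₂, _, hJ.oplus_mem hb₁ hb₂, rfl⟩

lemma image_oplus_left_setOplus_subset (hA : IsNormalIdealIn u (Set.Icc 0 u) A)
    (hJ : IsNormalIdealIn u (Set.Icc 0 u) J) (hx : x ∈ Set.Icc 0 u) :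
    (fun i => oplus u x i) '' setOplus u A J ⊆ (fun i => oplus u i x) '' setOplus u A J := by
  rintro _ ⟨_, ⟨a, ha, b, hb, rfl⟩, rfl⟩
  obtain ⟨a', ha', hxa⟩ := hA.exists_oplus_right_eq hx ha
  obtain ⟨b', hb', hxb⟩ := hJ.exists_oplus_right_eq hx hb
  refine ⟨oplus u a' b', ⟨a', ha', b', hb', rfl⟩, ?_⟩
  calc oplus u (oplus u a' b') x = oplus u a' (oplus u x b) := by
        rw [oplus_assoc (hA.1.1 ha').1 hx.1, hxb]
    _ = oplus u x (oplus u a b) := by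
        rw [← oplus_assoc (hA.1.1 ha').1 (hJ.1.1 hb).1, hxa, oplus_assoc hx.1 (hJ.1.1 hb).1]

lemma image_oplus_right_setOplus_subset (hA : IsNormalIdealIn u (Set.Icc 0 u) A)
    (hJ : IsNormalIdealIn u (Set.Icc 0 u) J) (hx : x ∈ Set.Icc 0 u) :
    (fun i => oplus u i x) '' setOplus u A J ⊆ (fun i => oplus u x i) '' setOplus u A J := by
  rintro _ ⟨_, ⟨a, ha, b, hb, rfl⟩, rfl⟩
  obtain ⟨a', ha', hxa⟩ := hA.exists_oplus_left_eq hx ha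
  obtain ⟨b', hb', hxb⟩ := hJ.exists_oplus_left_eq hx hb
  refine ⟨oplus u a' b', ⟨a', ha', b', hb', rfl⟩, ?_⟩
  calc oplus u x (oplus u a' b') = oplus u (oplus u a x) b' := by
        rw [← oplus_assoc hx.1 (hJ.1.1 hb').1, hxa]
    _ = oplus u (oplus u a b) x := by
        rw [oplus_assoc (hA.1.1 ha).1 (hJ.1.1 hb').1, hxb, ← oplus_assoc (hA.1.1 ha).1 hx.1]

lemma isNormalIdealIn_setOplus (hA : IsNormalIdealIn u (Set.Icc 0 u) A)
    (hJ : IsNormalIdealIn u (Set.Icc 0 u) J) (horth : ∀ a ∈ A, ∀ b ∈ J, a ⊓ b = 0) :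
    IsNormalIdealIn u (Set.Icc 0 u) (setOplus u A J) :=
  ⟨isIdealIn_setOplus hA.1 hJ.1 horth, fun _ hx =>
    (image_oplus_left_setOplus_subset hA hJ hx).antisymm
      (image_oplus_right_setOplus_subset hA hJ hx)⟩

lemma IsSummandIdealIn.setOplus_polarIn_eq (hA : IsSummandIdealIn u (Set.Icc 0 u) A) :
    setOplus u A (polarIn (Set.Icc 0 u) A) = Set.Icc 0 u := by
  obtain ⟨hAn, J, hJ, hAJ, hgen⟩ := hA
  have horth : ∀ a ∈ A, ∀ b ∈ J, a ⊓ b = 0 := fun a ha b hb =>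
    hAn.1.inf_eq_zero_of_inter_eq hJ.1 hAJ ha hb
  have hJA : J ⊆ polarIn (Set.Icc 0 u) A := fun b hb =>
    ⟨hJ.1.1 hb, fun a ha => inf_comm a b ▸ horth a ha b hb⟩
  refine (setOplus_subset_Icc hAn.1.1 fun _ hb => hb.1).antisymm ?_
  calc Set.Icc 0 u = normalGenIn u (Set.Icc 0 u) (A ∪ J) := hgen.symm
    _ ⊆ setOplus u A J := Set.sInter_subset_of_mem
        ⟨isNormalIdealIn_setOplus hAn hJ horth, union_subset_setOplus hAn.1 hJ.1⟩
    _ ⊆ setOplus u A (polarIn (Set.Icc 0 u) A) := Set.image2_subset_left hJA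

end SetOplus

theorem stmt4_general (u : G) (A : Set G)
    (hA : IsSummandIdealIn u (Set.Icc (0 : G) u) A)
    (I : Set G) (hI : IsNormalIdealIn u (Set.Icc (0 : G) u) I) :
    I = setOplus u (A ∩ I) (I ∩ polarIn (Set.Icc (0 : G) u) A) := by
  refine Set.Subset.antisymm (fun x hx => ?_) ?_
  · obtain ⟨a, ha, b, hb, rfl⟩ : x ∈ setOplus u A (polarIn (Set.Icc 0 u) A) := by
      rw [hA.setOplus_polarIn_eq]; exact hI.1.1 hx
    have ha' := hA.1.1.1 ha
    have hb' := hb.1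
    exact ⟨a, ⟨ha, hI.1.mem_of_le hx ha'.1 (le_oplus_left ha'.2 hb'.1)⟩,
      b, ⟨hI.1.mem_of_le hx hb'.1 (le_oplus_right ha'.1 hb'.2), hb⟩, rfl⟩
  · rintro _ ⟨a, ⟨-, ha⟩, b, ⟨hb, -⟩, rfl⟩
    exact hI.1.oplus_mem ha hb

theorem stmt4 (u : G) (hu : IsStrongUnit u) (A : Set G)
    (hA : IsSummandIdealIn u (Set.Icc (0 : G) u) A)
    (I : Set G) (hI : IsNormalIdealIn u (Set.Icc (0 : G) u) I) :
    I = setOplus u (A ∩ I) (I ∩ polarIn (Set.Icc (0 : G) u) A) :=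
  stmt4_general u A hA I hI
end

section
/- Let N be a large subalgebra of the pseudo MV-algebra M = Γ(G,u) (so M is an essential extension of N). If S ⊆ N and v ∈ N is the least upper bound of S within N, then v is also the least upper bound of S within M. -/
variable {G : Type*} [Lattice G] [AddGroup G]
  [CovariantClass G G (· + ·) (· ≤ ·)]
  [CovariantClass G G (Function.swap (· + ·)) (· ≤ ·)]

/-!
Let `w ∈ Γ(G,u)` bound `S` and put `z := (-w + v)⁺`, so that `s + z ≤ v` for all `s ∈ S` and
`v ≤ w` as soon as `z = 0`. By induction on `m`, every `c ∈ N` with `c ≤ v` and `c ≤ m • z`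
vanishes: for `s ∈ S` the element `-s + v ∈ N` dominates `z`, so `(c - (-s + v))⁺ ∈ N` lies below
`(m - 1) • z` and vanishes, i.e. `s + c ≤ v`; then `v - c ∈ N` bounds `S`, forcing `c = 0`.
If `z ≠ 0`, largeness gives `0 ≠ x ∈ N` with `x ≤ n • z`; the above makes `x ⊓ v = 0`, hence
`x ⊓ n • z = 0` and `x = 0`, a contradiction.
-/

section LatticeOrderedGroup

variable {a b c : G}

lemma inf_add_le_add_inf (ha : 0 ≤ a) (hb : 0 ≤ b) (hc : 0 ≤ c) :
    a ⊓ (b + c) ≤ a ⊓ b + a ⊓ c := by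
  rw [add_inf, inf_add, inf_add]
  refine le_inf (le_inf ?_ ?_) (le_inf ?_ inf_le_right)
  · exact inf_le_left.trans (le_add_of_nonneg_right ha)
  · exact inf_le_left.trans (le_add_of_nonneg_left hb)
  · exact inf_le_left.trans (le_add_of_nonneg_right hc)

lemma inf_nsmul_eq_zero (ha : 0 ≤ a) (hb : 0 ≤ b) (h : a ⊓ b = 0) (n : ℕ) :
    a ⊓ n • b = 0 := by
  induction n with
  | zero => rw [zero_nsmul, inf_eq_right.mpr ha]
  | succ n ih =>
    refine le_antisymm ?_ (le_inf ha (nsmul_nonneg hb _))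
    calc a ⊓ (n + 1) • b = a ⊓ (n • b + b) := by rw [succ_nsmul]
      _ ≤ a ⊓ n • b + a ⊓ b := inf_add_le_add_inf ha (nsmul_nonneg hb n) hb
      _ = 0 := by rw [ih, h, add_zero]

lemma eq_zero_of_inf_eq_zero_of_le_nsmul (ha : 0 ≤ a) (hb : 0 ≤ b) (h : a ⊓ b = 0) {n : ℕ}
    (hab : a ≤ n • b) : a = 0 := by
  rw [← inf_nsmul_eq_zero ha hb h n, inf_eq_left.mpr hab]

end LatticeOrderedGroup

omit [CovariantClass G G (· + ·) (· ≤ ·)] in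
lemma nOplus_le_nsmul (u y : G) (n : ℕ) : nOplus u n y ≤ n • y := by
  induction n with
  | zero => simp [nOplus]
  | succ n ih =>
    rw [succ_nsmul]
    exact inf_le_left.trans (add_le_add_left ih y)

namespace IsSubalg

variable {u : G} {N : Set G} {x y : G}

lemma odot_mem (hN : IsSubalg u N) (hx : x ∈ N) (hy : y ∈ N) : odot u x y ∈ N := by
  obtain ⟨-, -, -, hoplus, hsub, hneg⟩ := hN
  have : odot u x y = u - oplus u (-y + u) (-x + u) := by
    simp [odot, oplus, sub_eq_add_neg, neg_inf, add_sup, neg_add_rev, add_assoc]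
  rw [this]
  exact hsub _ (hoplus _ (hneg _ hy) _ (hneg _ hx))

lemma posPart_sub_mem (hN : IsSubalg u N) (hx : x ∈ N) (hy : y ∈ N) : (x - y)⁺ ∈ N := by
  have : odot u x (u - y) = (x - y)⁺ := by
    simp [odot, posPart_def, sub_eq_add_neg, add_assoc]
  exact this ▸ hN.odot_mem hx (hN.2.2.2.2.1 _ hy)

lemma posPart_neg_add_mem (hN : IsSubalg u N) (hx : x ∈ N) (hy : y ∈ N) : (-y + x)⁺ ∈ N := by
  have : odot u (-y + u) x = (-y + x)⁺ := by
    simp [odot, posPart_def, sub_eq_add_neg, add_assoc]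
  exact this ▸ hN.odot_mem (hN.2.2.2.2.2 _ hy) hx

lemma inf_mem (hN : IsSubalg u N) (hx : x ∈ N) (hy : y ∈ N) : x ⊓ y ∈ N := by
  have hxy : x ⊓ y = (-(x - y)⁺ + x)⁺ := by
    have : -(x - y)⁺ + x = x ⊓ y := by
      rw [posPart_def, neg_sup, neg_zero, inf_add, neg_sub, sub_add_cancel, zero_add, inf_comm]
    rw [this, posPart_eq_self.mpr (le_inf (hN.1 hx).1 (hN.1 hy).1)]
  exact hxy ▸ hN.posPart_neg_add_mem hx (hN.posPart_sub_mem hx hy)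

end IsSubalg

section LeastUpperBound

variable {u : G} {N S : Set G} {v : G}

lemma eq_zero_of_forall_add_le_of_isLUB (hN : IsSubalg u N) (hv : v ∈ N)
    (hlb : ∀ w ∈ N, (∀ s ∈ S, s ≤ w) → v ≤ w) {c : G} (hc : c ∈ N) (hcv : c ≤ v)
    (hSc : ∀ s ∈ S, s + c ≤ v) : c = 0 := by
  have hvc : (v - c)⁺ = v - c := posPart_eq_self.mpr (sub_nonneg.mpr hcv)
  have hbound : v ≤ v - c :=
    hlb _ (hvc ▸ hN.posPart_sub_mem hv hc) fun s hs => le_sub_iff_add_le.mpr (hSc s hs)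
  exact le_antisymm (by simpa using le_sub_iff_add_le.mp hbound) (hN.1 hc).1

lemma eq_zero_of_le_nsmul_of_isLUB (hN : IsSubalg u N) (hS : S ⊆ N) (hv : v ∈ N)
    (hlb : ∀ w ∈ N, (∀ s ∈ S, s ≤ w) → v ≤ w) {z : G} (hz : 0 ≤ z)
    (hSz : ∀ s ∈ S, s + z ≤ v) (m : ℕ) {c : G} (hc : c ∈ N) (hcz : c ≤ m • z)
    (hcv : c ≤ v) : c = 0 := by
  induction m generalizing c with
  | zero => exact le_antisymm (by simpa using hcz) (hN.1 hc).1
  | succ m ih =>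
    refine eq_zero_of_forall_add_le_of_isLUB hN hv hlb hc hcv fun s hs => ?_
    have hzb : z ≤ -s + v := le_neg_add_iff_add_le.mpr (hSz s hs)
    have hsv : 0 ≤ -s + v := hz.trans hzb
    have hbN : -s + v ∈ N := posPart_eq_self.mpr hsv ▸ hN.posPart_neg_add_mem hv (hS hs)
    have hc' : (c - (-s + v))⁺ = 0 := by
      refine ih (hN.posPart_sub_mem hc hbN) ?_ ?_
      · refine sup_le ?_ (nsmul_nonneg hz m)
        calc c - (-s + v) ≤ (m + 1) • z - z :=
              (sub_le_sub_right hcz _).trans (sub_le_sub_left hzb _)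
          _ = m • z := by rw [succ_nsmul, add_sub_cancel_right]
      · exact sup_le ((sub_le_iff_le_add.mpr (le_add_of_nonneg_right hsv)).trans hcv)
          ((hN.1 hc).1.trans hcv)
    exact le_neg_add_iff_add_le.mp (sub_nonpos.mp (posPart_eq_zero.mp hc'))

lemma eq_zero_of_forall_add_le_of_isLUB_of_isLarge (hN : IsLargeSubalg u N) (hS : S ⊆ N)
    (hv : v ∈ N) (hlb : ∀ w ∈ N, (∀ s ∈ S, s ≤ w) → v ≤ w) {z : G} (hz : 0 ≤ z)
    (hzv : z ≤ v) (hSz : ∀ s ∈ S, s + z ≤ v) : z = 0 := by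
  obtain ⟨hsub, hlarge⟩ := hN
  by_contra hz0
  obtain ⟨n, x, hx, hx0, hxz⟩ := hlarge z ⟨hz, hzv.trans (hsub.1 hv).2⟩ hz0
  have hxz : x ≤ n • z := hxz.trans (nOplus_le_nsmul u z n)
  have hxv : x ⊓ v = 0 := eq_zero_of_le_nsmul_of_isLUB hsub hS hv hlb hz hSz n
    (hsub.inf_mem hx hv) (inf_le_left.trans hxz) inf_le_right
  have hxz0 : x ⊓ z = 0 :=
    le_antisymm ((inf_le_inf_left x hzv).trans hxv.le) (le_inf (hsub.1 hx).1 hz)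
  exact hx0 (eq_zero_of_inf_eq_zero_of_le_nsmul (hsub.1 hx).1 hz hxz0 hxz)

end LeastUpperBound

theorem stmt13_general (u : G) (N : Set G)
    (hN : IsLargeSubalg u N) (S : Set G) (hS : S ⊆ N) (v : G) (hv : v ∈ N)
    (hub : ∀ s ∈ S, s ≤ v)
    (hlb : ∀ w ∈ N, (∀ s ∈ S, s ≤ w) → v ≤ w) :
    (∀ s ∈ S, s ≤ v) ∧ ∀ w ∈ Set.Icc (0 : G) u, (∀ s ∈ S, s ≤ w) → v ≤ w := by
  refine ⟨hub, fun w ⟨hw, _⟩ hSw => ?_⟩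
  have hv0 : 0 ≤ v := (hN.1.1 hv).1
  have hzv : (-w + v)⁺ ≤ v := sup_le (neg_add_le_iff_le_add.mpr (le_add_of_nonneg_left hw)) hv0
  have hSz : ∀ s ∈ S, s + (-w + v)⁺ ≤ v := fun s hs => by
    rw [posPart_def, add_sup, add_zero, ← add_assoc]
    exact sup_le (add_le_of_nonpos_left (add_neg_nonpos_iff_le.mpr (hSw s hs))) (hub s hs)
  have hz := eq_zero_of_forall_add_le_of_isLUB_of_isLarge hN hS hv hlb (posPart_nonneg _) hzv hSz
  simpa using posPart_eq_zero.mp hz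

theorem stmt13 (u : G) (hu : IsStrongUnit u) (N : Set G)
    (hN : IsLargeSubalg u N) (S : Set G) (hS : S ⊆ N) (v : G) (hv : v ∈ N)
    (hub : ∀ s ∈ S, s ≤ v)
    (hlb : ∀ w ∈ N, (∀ s ∈ S, s ≤ w) → v ≤ w) :
    (∀ s ∈ S, s ≤ v) ∧ ∀ w ∈ Set.Icc (0 : G) u, (∀ s ∈ S, s ≤ w) → v ≤ w :=
  stmt13_general u N hN S hS v hv hub hlb
end
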